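/- Let E be a Polish space with Borel σ-algebra 𝓔 and U a compact metric space. Let P^a(x,·) be a controlled transition kernel on E, and let u_n, u : E → U be Borel measurable controls with u_n(x) → u(x) for every x ∈ E, such that for every x ∈ E, sup_{B ∈ 𝓔} |Q^{u_n}(x,B) − Q^{u}(x,B)| → 0 as n → ∞. Assume there are Δ ∈ [0,1) and Borel probability measures π^{u_n}, π^{u} with sup_{B ∈ 𝓔} |(Q^{u_n})^k(x,B) − π^{u_n}(B)| ≤ Δ^k and sup_{B ∈ 𝓔} |(Q^{u})^k(x,B) − π^{u}(B)| ≤ Δ^k for all k, n, x. Let c : E × U → ℝ be bounded, Borel measurable, and continuous in its second variable. Then ∫_E c(y,u_n(y)) π^{u_n}(dy) → ∫_E c(y,u(y)) π^{u}(dy) as n → ∞. -/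

import Mathlib

/-!
Total variation controls integrals of bounded functions: on the two pieces of a Hahn
decomposition one of `μ`, `ν` dominates the other, so `|∫ f dμ - ∫ f dν| ≤ 2 C ‖μ - ν‖_TV`.

By induction on `k`, `(Q^{u_n})^k(x, B_n) - (Q^u)^k(x, B_n) → 0` even for sets `B_n` moving
with `n`: one more step splits into a total variation term for `Q^{u_n}(x,·)` against
`Q^u(x,·)` and a dominated convergence term. Uniform ergodicity gives
`|π^{u_n}(B) - π^u(B)| ≤ 2Δ^k + |(Q^{u_n})^k(x,B) - (Q^u)^k(x,B)|`, and choosing `B = B_n`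
nearly optimal shows `π^{u_n} → π^u` in total variation. Finally the change of measure costs
at most `2 C ‖π^{u_n} - π^u‖_TV`, and the change of control vanishes by dominated convergence,
since `c` is continuous in the control.
-/

open MeasureTheory ProbabilityTheory Filter
open scoped ENNReal

/-- Total variation distance `sup_{B ∈ 𝓔} |μ(B) − ν(B)|`. -/
noncomputable def tvDist {E : Type*} [MeasurableSpace E] (μ ν : Measure E) : ℝ :=
  ⨆ B : {B : Set E // MeasurableSet B}, |(μ B.1).toReal - (ν B.1).toReal|

/-- `k`-th iterate of a kernel. -/
noncomputable def kIter {E : Type*} [MeasurableSpace E] (Q : Kernel E E) : ℕ → Kernel E E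
  | 0 => Kernel.id
  | k + 1 => (kIter Q k) ∘ₖ Q

/-- The kernel `Q^u(x,·) = P^{u(x)}(x,·)` associated with a Borel measurable control `u`. -/
noncomputable def Qctrl {E U : Type*} [MeasurableSpace E] [MeasurableSpace U]
    (P : Kernel (E × U) E) (u : E → U) (hu : Measurable u) : Kernel E E :=
  P.comap (fun x => (x, u x)) (measurable_id.prodMk hu)

open Topology

section TotalVariation

variable {E : Type*} [MeasurableSpace E]

lemma tvDist_nonneg (μ ν : Measure E) : 0 ≤ tvDist μ ν :=
  Real.iSup_nonneg fun _ => abs_nonneg _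

lemma abs_measureReal_sub_le_tvDist (μ ν : Measure E) [IsFiniteMeasure μ] [IsFiniteMeasure ν]
    {B : Set E} (hB : MeasurableSet B) : |μ.real B - ν.real B| ≤ tvDist μ ν := by
  refine le_ciSup (f := fun B : {B : Set E // MeasurableSet B} => |μ.real B - ν.real B|)
    ⟨μ.real Set.univ + ν.real Set.univ, ?_⟩ ⟨B, hB⟩
  rintro _ ⟨B, rfl⟩
  have hμ : μ.real B ≤ μ.real Set.univ := measureReal_mono (Set.subset_univ _)
  have hν : ν.real B ≤ ν.real Set.univ := measureReal_mono (Set.subset_univ _)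
  have hμ0 : 0 ≤ μ.real B := measureReal_nonneg
  have hν0 : 0 ≤ ν.real B := measureReal_nonneg
  rw [abs_sub_le_iff]
  constructor <;> linarith

lemma integrable_of_abs_le {μ : Measure E} [IsFiniteMeasure μ] {f : E → ℝ} (hf : Measurable f)
    {C : ℝ} (hC : ∀ x, |f x| ≤ C) : Integrable f μ :=
  .of_bound hf.aestronglyMeasurable C (ae_of_all _ hC)

lemma abs_integral_sub_le_of_le {μ ν : Measure E} [IsFiniteMeasure ν] (hμν : μ ≤ ν)
    {f : E → ℝ} (hf : Measurable f) {C : ℝ} (hC : ∀ x, |f x| ≤ C) :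
    |∫ x, f x ∂ν - ∫ x, f x ∂μ| ≤ C * (ν.real Set.univ - μ.real Set.univ) := by
  have : IsFiniteMeasure μ := isFiniteMeasure_of_le ν hμν
  have hν : ν = (ν - μ) + μ := (Measure.sub_add_cancel_of_le hμν).symm
  have hmass : ν.real Set.univ - μ.real Set.univ = (ν - μ).real Set.univ := by
    conv_lhs => rw [hν]
    rw [measureReal_add_apply]; ring
  rw [hmass]
  conv_lhs => rw [hν, integral_add_measure (integrable_of_abs_le hf hC)
    (integrable_of_abs_le hf hC), add_sub_cancel_right]
  have hC' : ∀ x, ‖f x‖ ≤ C := hC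
  exact norm_integral_le_of_norm_le_const (ae_of_all _ hC')

lemma abs_integral_sub_le_two_mul_tvDist (μ ν : Measure E) [IsFiniteMeasure μ]
    [IsFiniteMeasure ν] {f : E → ℝ} (hf : Measurable f) {C : ℝ} (hC0 : 0 ≤ C)
    (hC : ∀ x, |f x| ≤ C) :
    |∫ x, f x ∂μ - ∫ x, f x ∂ν| ≤ 2 * C * tvDist μ ν := by
  obtain ⟨s, hs⟩ := exists_isHahnDecomposition μ ν
  have hon := abs_integral_sub_le_of_le hs.le_on hf hC
  have hoff := abs_integral_sub_le_of_le hs.ge_on_compl hf hC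
  simp only [measureReal_restrict_apply_univ] at hon hoff
  have htv_on : ν.real s - μ.real s ≤ tvDist μ ν :=
    (le_abs_self _).trans
      (abs_sub_comm (μ.real s) _ ▸ abs_measureReal_sub_le_tvDist μ ν hs.measurableSet)
  have htv_off : μ.real sᶜ - ν.real sᶜ ≤ tvDist μ ν :=
    (le_abs_self _).trans (abs_measureReal_sub_le_tvDist μ ν hs.measurableSet.compl)
  rw [← integral_add_compl (μ := μ) hs.measurableSet (integrable_of_abs_le hf hC),
    ← integral_add_compl (μ := ν) hs.measurableSet (integrable_of_abs_le hf hC)]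
  calc _ ≤ |∫ x in s, f x ∂ν - ∫ x in s, f x ∂μ|
          + |∫ x in sᶜ, f x ∂μ - ∫ x in sᶜ, f x ∂ν| := by
        rw [abs_sub_comm (∫ x in s, f x ∂ν)]
        exact (abs_add_le _ _).trans_eq' (by ring_nf)
    _ ≤ C * tvDist μ ν + C * tvDist μ ν :=
        add_le_add (hon.trans (by gcongr)) (hoff.trans (by gcongr))
    _ = 2 * C * tvDist μ ν := by ring

lemma tendsto_tvDist_of_forall_measurableSet (μ ν : ℕ → Measure E)
    [∀ n, IsFiniteMeasure (μ n)] [∀ n, IsFiniteMeasure (ν n)]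
    (h : ∀ B : ℕ → Set E, (∀ n, MeasurableSet (B n)) →
      Tendsto (fun n => (μ n).real (B n) - (ν n).real (B n)) atTop (𝓝 0)) :
    Tendsto (fun n => tvDist (μ n) (ν n)) atTop (𝓝 0) := by
  have : Nonempty {B : Set E // MeasurableSet B} := ⟨⟨∅, .empty⟩⟩
  have hnear : ∀ n : ℕ, ∃ B : {B : Set E // MeasurableSet B},
      tvDist (μ n) (ν n) - 1 / (n + 1) < |(μ n).real B - (ν n).real B| := fun n =>
    exists_lt_of_lt_ciSup (sub_lt_self _ (by positivity))
  choose B hB using hnear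
  refine squeeze_zero (fun n => tvDist_nonneg _ _) (fun n => (sub_lt_iff_lt_add.mp (hB n)).le) ?_
  simpa using (h (fun n => (B n).1) fun n => (B n).2).abs.add
    tendsto_one_div_add_atTop_nhds_zero_nat

end TotalVariation

section KernelIterates

variable {E : Type*} [MeasurableSpace E]

instance isMarkovKernel_kIter (Q : Kernel E E) [IsMarkovKernel Q] (k : ℕ) :
    IsMarkovKernel (kIter Q k) := by
  induction k with
  | zero => rw [kIter]; infer_instance
  | succ k ih => rw [kIter]; infer_instance

instance isMarkovKernel_Qctrl {U : Type*} [MeasurableSpace U] (P : Kernel (E × U) E)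
    [IsMarkovKernel P] (u : E → U) (hu : Measurable u) : IsMarkovKernel (Qctrl P u hu) := by
  rw [Qctrl]; infer_instance

lemma measurable_measureReal_apply {α β : Type*} [MeasurableSpace α] [MeasurableSpace β]
    (κ : Kernel α β) {B : Set β} (hB : MeasurableSet B) :
    Measurable fun y => (κ y).real B :=
  (κ.measurable_coe hB).ennreal_toReal

lemma abs_measureReal_apply_le_one {α β : Type*} [MeasurableSpace α] [MeasurableSpace β]
    (κ : Kernel α β) [IsMarkovKernel κ] (y : α) (B : Set β) :
    |(κ y).real B| ≤ 1 :=
  abs_le.mpr ⟨by linarith [measureReal_nonneg (μ := κ y) (s := B)], measureReal_le_one⟩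

lemma kIter_succ_apply_measureReal (Q : Kernel E E) [IsMarkovKernel Q] (k : ℕ) (x : E)
    {B : Set E} (hB : MeasurableSet B) :
    (kIter Q (k + 1) x).real B = ∫ y, (kIter Q k y).real B ∂(Q x) := by
  rw [measureReal_def, kIter, Kernel.comp_apply, Measure.bind_apply hB (Kernel.aemeasurable _),
    ← integral_toReal ((kIter Q k).measurable_coe hB).aemeasurable
      (ae_of_all _ fun _ => measure_lt_top _ _)]
  rfl

lemma tendsto_kIter_measureReal_sub {K : ℕ → Kernel E E} {Q : Kernel E E}
    [∀ n, IsMarkovKernel (K n)] [IsMarkovKernel Q]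
    (hK : ∀ x, Tendsto (fun n => tvDist (K n x) (Q x)) atTop (𝓝 0))
    {B : ℕ → Set E} (hB : ∀ n, MeasurableSet (B n)) (k : ℕ) (x : E) :
    Tendsto (fun n => (kIter (K n) k x).real (B n) - (kIter Q k x).real (B n)) atTop (𝓝 0) := by
  induction k generalizing x with
  | zero => simp only [kIter, sub_self, tendsto_const_nhds]
  | succ k ih =>
    set f := fun n y => (kIter (K n) k y).real (B n)
    set g := fun n y => (kIter Q k y).real (B n)
    have hf : ∀ n, Measurable (f n) := fun n => measurable_measureReal_apply _ (hB n)
    have hg : ∀ n, Measurable (g n) := fun n => measurable_measureReal_apply _ (hB n)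
    have hsplit : ∀ n, (kIter (K n) (k + 1) x).real (B n) - (kIter Q (k + 1) x).real (B n) =
        (∫ y, f n y ∂(K n x) - ∫ y, f n y ∂(Q x)) + ∫ y, f n y - g n y ∂(Q x) := fun n => by
      rw [kIter_succ_apply_measureReal _ _ _ (hB n), kIter_succ_apply_measureReal _ _ _ (hB n),
        integral_sub (integrable_of_abs_le (hf n) (abs_measureReal_apply_le_one _ · _))
          (integrable_of_abs_le (hg n) (abs_measureReal_apply_le_one _ · _))]
      ring
    have hfirst : Tendsto (fun n => ∫ y, f n y ∂(K n x) - ∫ y, f n y ∂(Q x)) atTop (𝓝 0) := by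
      refine squeeze_zero_norm (fun n => ?_) (by simpa using (hK x).const_mul 2)
      simpa using abs_integral_sub_le_two_mul_tvDist (K n x) (Q x) (hf n) zero_le_one
        (abs_measureReal_apply_le_one _ · _)
    have hlater : Tendsto (fun n => ∫ y, f n y - g n y ∂(Q x)) atTop (𝓝 0) := by
      simpa using tendsto_integral_of_dominated_convergence (fun _ => 1)
        (fun n => ((hf n).sub (hg n)).aestronglyMeasurable) (integrable_const 1)
        (fun n => ae_of_all _ fun y => abs_sub_le_of_nonneg_of_le measureReal_nonneg
          measureReal_le_one measureReal_nonneg measureReal_le_one)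
        (ae_of_all _ ih)
    simpa only [hsplit, add_zero] using hfirst.add hlater

end KernelIterates

lemma tendsto_zero_of_forall_abs_le_add {ι : Type*} {l : Filter ι} {a : ι → ℝ} {e : ℕ → ℝ}
    {b : ℕ → ι → ℝ} (he : Tendsto e atTop (𝓝 0)) (hb : ∀ k, Tendsto (b k) l (𝓝 0))
    (h : ∀ k i, |a i| ≤ e k + b k i) : Tendsto a l (𝓝 0) := by
  rw [Metric.tendsto_nhds]
  intro ε hε
  obtain ⟨k, hk⟩ := (he.eventually (gt_mem_nhds (half_pos hε))).exists
  filter_upwards [(hb k).eventually (gt_mem_nhds (half_pos hε))] with i hi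
  rw [Real.dist_0_eq_abs]
  linarith [h k i]

lemma tendsto_tvDist_of_uniformly_ergodic {E : Type*} [MeasurableSpace E]
    {K : ℕ → Kernel E E} {Q : Kernel E E} [∀ n, IsMarkovKernel (K n)] [IsMarkovKernel Q]
    (hK : ∀ x, Tendsto (fun n => tvDist (K n x) (Q x)) atTop (𝓝 0))
    {Δ : ℝ} (hΔ0 : 0 ≤ Δ) (hΔ1 : Δ < 1) {π : ℕ → Measure E} {πQ : Measure E}
    [∀ n, IsProbabilityMeasure (π n)] [IsProbabilityMeasure πQ]
    (hergK : ∀ k : ℕ, 1 ≤ k → ∀ n x, tvDist (kIter (K n) k x) (π n) ≤ Δ ^ k)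
    (hergQ : ∀ k : ℕ, 1 ≤ k → ∀ x, tvDist (kIter Q k x) πQ ≤ Δ ^ k) :
    Tendsto (fun n => tvDist (π n) πQ) atTop (𝓝 0) := by
  obtain ⟨x₀⟩ := nonempty_of_isProbabilityMeasure πQ
  refine tendsto_tvDist_of_forall_measurableSet _ _ fun B hB => ?_
  refine tendsto_zero_of_forall_abs_le_add (e := fun k => 2 * Δ ^ (k + 1))
    (b := fun k n => |(kIter (K n) (k + 1) x₀).real (B n) - (kIter Q (k + 1) x₀).real (B n)|)
    ?_ (fun k => by simpa using (tendsto_kIter_measureReal_sub hK hB (k + 1) x₀).abs) fun k n => ?_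
  · simpa using ((tendsto_pow_atTop_nhds_zero_of_lt_one hΔ0 hΔ1).comp
      (tendsto_add_atTop_nat 1)).const_mul 2
  · have hKπ := (abs_measureReal_sub_le_tvDist _ _ (hB n)).trans (hergK (k + 1) le_add_self n x₀)
    have hQπ := (abs_measureReal_sub_le_tvDist _ _ (hB n)).trans (hergQ (k + 1) le_add_self x₀)
    rw [abs_sub_comm] at hKπ
    have := abs_sub_le ((π n).real (B n)) ((kIter (K n) (k + 1) x₀).real (B n)) (πQ.real (B n))
    have := abs_sub_le ((kIter (K n) (k + 1) x₀).real (B n)) ((kIter Q (k + 1) x₀).real (B n))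
      (πQ.real (B n))
    linarith

theorem stmt4_general {E U : Type*} [MeasurableSpace E] [MetricSpace U] [MeasurableSpace U]
    (P : Kernel (E × U) E) [IsMarkovKernel P]
    (un : ℕ → E → U) (u : E → U)
    (hun : ∀ n, Measurable (un n)) (hu : Measurable u)
    (hconv : ∀ x, Tendsto (fun n => un n x) atTop (nhds (u x)))
    (htv : ∀ x, Tendsto
      (fun n => tvDist (Qctrl P (un n) (hun n) x) (Qctrl P u hu x)) atTop (nhds 0))
    (Δ : ℝ) (hΔ0 : 0 ≤ Δ) (hΔ1 : Δ < 1)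
    (πn : ℕ → Measure E) (πu : Measure E)
    [∀ n, IsProbabilityMeasure (πn n)] [IsProbabilityMeasure πu]
    (hergn : ∀ k : ℕ, 1 ≤ k → ∀ n : ℕ, ∀ x : E,
      tvDist (kIter (Qctrl P (un n) (hun n)) k x) (πn n) ≤ Δ ^ k)
    (herg : ∀ k : ℕ, 1 ≤ k → ∀ x : E,
      tvDist (kIter (Qctrl P u hu) k x) πu ≤ Δ ^ k)
    (c : E × U → ℝ) (hc : Measurable c) (C : ℝ) (hcb : ∀ p, |c p| ≤ C)
    (hccont : ∀ y : E, Continuous (fun a : U => c (y, a))) :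
    Tendsto (fun n => ∫ y, c (y, un n y) ∂ (πn n)) atTop
      (nhds (∫ y, c (y, u y) ∂ πu)) := by
  obtain ⟨x₀⟩ := nonempty_of_isProbabilityMeasure πu
  have hC0 : 0 ≤ C := (abs_nonneg _).trans (hcb (x₀, u x₀))
  have hcn : ∀ n, Measurable fun y => c (y, un n y) := fun n =>
    hc.comp (measurable_id.prodMk (hun n))
  have hπ := tendsto_tvDist_of_uniformly_ergodic htv hΔ0 hΔ1 hergn herg
  have hmeasure : Tendsto (fun n => ∫ y, c (y, un n y) ∂(πn n) - ∫ y, c (y, un n y) ∂πu)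
      atTop (𝓝 0) :=
    squeeze_zero_norm (fun n => abs_integral_sub_le_two_mul_tvDist _ _ (hcn n) hC0 (fun y => hcb _))
      (by simpa using hπ.const_mul (2 * C))
  have hcontrol : Tendsto (fun n => ∫ y, c (y, un n y) ∂πu) atTop (𝓝 (∫ y, c (y, u y) ∂πu)) :=
    tendsto_integral_of_dominated_convergence (fun _ => C)
      (fun n => (hcn n).aestronglyMeasurable) (integrable_const C)
      (fun n => ae_of_all _ fun y => hcb _)
      (ae_of_all _ fun y => ((hccont y).tendsto (u y)).comp (hconv y))
  simpa using hmeasure.add hcontrol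

/-- Theorem 1, second claim: under uniform ergodicity with rate `Δ^k`
and total variation convergence of the controlled kernels along `u_n → u`,
the average costs `∫ c(y,u_n(y)) dπ^{u_n}` converge to `∫ c(y,u(y)) dπ^u`. -/
theorem stmt4 {E U : Type*} [TopologicalSpace E] [PolishSpace E]
    [MeasurableSpace E] [BorelSpace E]
    [MetricSpace U] [CompactSpace U] [MeasurableSpace U] [BorelSpace U]
    (P : Kernel (E × U) E) [IsMarkovKernel P]
    (un : ℕ → E → U) (u : E → U)
    (hun : ∀ n, Measurable (un n)) (hu : Measurable u)
    (hconv : ∀ x, Tendsto (fun n => un n x) atTop (nhds (u x)))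
    (htv : ∀ x, Tendsto
      (fun n => tvDist (Qctrl P (un n) (hun n) x) (Qctrl P u hu x)) atTop (nhds 0))
    (Δ : ℝ) (hΔ0 : 0 ≤ Δ) (hΔ1 : Δ < 1)
    (πn : ℕ → Measure E) (πu : Measure E)
    [∀ n, IsProbabilityMeasure (πn n)] [IsProbabilityMeasure πu]
    (hergn : ∀ k : ℕ, 1 ≤ k → ∀ n : ℕ, ∀ x : E,
      tvDist (kIter (Qctrl P (un n) (hun n)) k x) (πn n) ≤ Δ ^ k)
    (herg : ∀ k : ℕ, 1 ≤ k → ∀ x : E,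
      tvDist (kIter (Qctrl P u hu) k x) πu ≤ Δ ^ k)
    (c : E × U → ℝ) (hc : Measurable c) (C : ℝ) (hcb : ∀ p, |c p| ≤ C)
    (hccont : ∀ y : E, Continuous (fun a : U => c (y, a))) :
    Tendsto (fun n => ∫ y, c (y, un n y) ∂ (πn n)) atTop
      (nhds (∫ y, c (y, u y) ∂ πu)) :=
  stmt4_general P un u hun hu hconv htv Δ hΔ0 hΔ1 πn πu hergn herg c hc C hcb hccont
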